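/- arXiv:2311.06294 — 2 statements merged into one kernel-verified Lean document; each statement's English description precedes it below -/
import Mathlib

section
/- The series of H(k)/(k(k+1)) over positive integers k converges to ζ(2). -/
open scoped BigOperators

/-- The harmonic number `H k = ∑_{j=1}^k 1/j`. -/
noncomputable def H (k : ℕ) : ℝ := ∑ j ∈ Finset.Icc 1 k, (1 : ℝ) / j

/-- The generalized harmonic number `H^{(p)} k = ∑_{j=1}^k 1/j^p`. -/
noncomputable def Hgen (p k : ℕ) : ℝ := ∑ j ∈ Finset.Icc 1 k, (1 : ℝ) / (j : ℝ) ^ p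

/-!
Writing `1/(k(k+1)) = 1/k - 1/(k+1)` and summing by parts, the partial sums are
`∑_{k=1}^n H(k)/(k(k+1)) = ∑_{k=1}^{n+1} 1/k² - H(n+1)/(n+1)`,
since `H(k) - H(k-1) = 1/k`. The correction term is a Cesàro mean of `1/k`, hence tends to `0`,
and the remaining sums tend to `ζ(2) = π²/6`.
-/

open Filter Topology Finset Real

lemma H_succ (k : ℕ) : H (k + 1) = H k + 1 / (k + 1) := by
  rw [H, H, sum_Icc_succ_top (by omega)]
  push_cast
  rfl

lemma H_eq_sum_range (k : ℕ) : H k = ∑ i ∈ range k, 1 / ((i : ℝ) + 1) := by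
  induction k with
  | zero => simp [H]
  | succ k ih => rw [H_succ, sum_range_succ, ih]

lemma H_nonneg (k : ℕ) : 0 ≤ H k :=
  sum_nonneg fun _ _ => by positivity

lemma tendsto_H_div_atTop : Tendsto (fun n : ℕ => H n / n) atTop (𝓝 0) := by
  have h := (tendsto_one_div_add_atTop_nhds_zero_nat (𝕜 := ℝ)).cesaro
  simpa only [← H_eq_sum_range, inv_mul_eq_div] using h

lemma sum_range_H_div_eq (n : ℕ) :
    ∑ k ∈ range n, H (k + 1) / ((k + 1 : ℝ) * (k + 2)) =
      ∑ k ∈ range (n + 1), 1 / ((k : ℝ) + 1) ^ 2 - H (n + 1) / (n + 1) := by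
  induction n with
  | zero => simp [H]
  | succ n ih =>
    rw [sum_range_succ, ih, sum_range_succ _ (n + 1), H_succ (n + 1)]
    push_cast
    field_simp
    ring

lemma hasSum_one_div_succ_sq : HasSum (fun k : ℕ => 1 / ((k : ℝ) + 1) ^ 2) (π ^ 2 / 6) := by
  have h := (hasSum_nat_add_iff' 1).mpr hasSum_zeta_two
  simpa using h

lemma hasSum_H_div : HasSum (fun k : ℕ => H (k + 1) / ((k + 1 : ℝ) * (k + 2))) (π ^ 2 / 6) := by
  rw [hasSum_iff_tendsto_nat_of_nonneg fun k => by have := H_nonneg (k + 1); positivity]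
  have h_sq := hasSum_one_div_succ_sq.tendsto_sum_nat.comp (tendsto_add_atTop_nat 1)
  have h_H := tendsto_H_div_atTop.comp (tendsto_add_atTop_nat 1)
  simpa only [sub_zero, sum_range_H_div_eq, Function.comp_def, Nat.cast_succ] using h_sq.sub h_H

theorem euler_sum_6 :
    HasSum (fun k : ℕ => (H (k+1) : ℂ) / (((k : ℂ) + 1) * ((k : ℂ) + 2))) (riemannZeta 2) := by
  rw [riemannZeta_two]
  exact_mod_cast Complex.hasSum_ofReal.mpr hasSum_H_div
end

section
/- The series of H(k)^2/(k(k+1)) over positive integers k converges to 3ζ(3). -/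
/-!
Write `F j k = 1 / (j k (j + k))` for positive integers `j, k`. Summing `F` along rows is a
telescoping sum, `∑_k F j k = H_j / j²`; summing along the antidiagonals `j + k = n` and using
`1 / (j k) = (1/j + 1/k) / n` gives `2 H_{n-1} / n²`. Since `H_j = H_{j-1} + 1/j`, the two
evaluations say `B + ζ(3) = 2 B` for `B = ∑ H_{n-1} / n²`, so `B = ζ(3)` (Euler).

Abel summation against `1 / (k (k + 1)) = 1/k - 1/(k + 1)` turns the series into
`∑ (H_k² - H_{k-1}²) / k = ∑ (2 H_{k-1} / k² + 1 / k³) = 3 ζ(3)`; the boundary term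
`H_N² / (N + 1)` tends to `0` because `H_N ≤ 1 + log N`.

Formally all indices are shifted to start at `0`: `H_{n-1} / n²` appears as
`harmonic n / (n + 1) ^ 2`.
-/

open scoped BigOperators

open Finset Filter Topology

lemma HasSum.sum_antidiagonal {α A : Type*} [AddCommMonoid α] [TopologicalSpace α]
    [ContinuousAdd α] [RegularSpace α] [AddMonoid A] [HasAntidiagonal A] {f : A × A → α} {a : α}
    (h : HasSum f a) : HasSum (fun n => ∑ p ∈ antidiagonal n, f p) a :=
  (HasAntidiagonal.sigmaAntidiagonalEquivProd.hasSum_iff.2 h).sigma fun n => by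
    rw [← sum_coe_sort]; exact hasSum_fintype _

lemma hasSum_prod_of_nonneg {β γ : Type*} {f : β × γ → ℝ} (hf : 0 ≤ f) {g : β → ℝ} {a : ℝ}
    (hfib : ∀ b, HasSum (fun c => f (b, c)) (g b)) (hg : HasSum g a) : HasSum f a := by
  have hs : Summable f := (summable_prod_of_nonneg hf).2
    ⟨fun b => (hfib b).summable, by simpa only [(hfib _).tsum_eq] using hg.summable⟩
  exact (hs.hasSum.prod_fiberwise hfib).unique hg ▸ hs.hasSum

lemma Antitone.hasSum_sub_add {f : ℕ → ℝ} (hf : Antitone f) (hf0 : Tendsto f atTop (𝓝 0))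
    (m : ℕ) : HasSum (fun k => f k - f (k + m)) (∑ i ∈ range m, f i) := by
  induction m with
  | zero => simp
  | succ m ih =>
    have step : HasSum (fun k => f (k + m) - f (k + 1 + m)) (f m) := by
      rw [hasSum_iff_tendsto_nat_of_nonneg fun k => sub_nonneg.2 (hf (by omega))]
      simpa [sum_range_sub' (fun k => f (k + m))] using
        (hf0.comp (tendsto_add_atTop_nat m)).const_sub (f m)
    convert ih.add step using 1
    · ext k; simp only [add_right_comm k 1 m, ← add_assoc]; ring
    · rw [sum_range_succ]

lemma H_eq_harmonic (n : ℕ) : H n = harmonic n := by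
  simp [H, harmonic_eq_sum_Icc]

lemma harmonic_cast_eq_sum_range (n : ℕ) :
    (harmonic n : ℝ) = ∑ i ∈ range n, 1 / ((i : ℝ) + 1) := by
  simp [harmonic]

lemma harmonic_cast_nonneg (n : ℕ) : 0 ≤ (harmonic n : ℝ) := by
  rw [harmonic_cast_eq_sum_range]; positivity

lemma harmonic_le_mul_rpow {ε : ℝ} (hε : 0 < ε) (n : ℕ) :
    (harmonic n : ℝ) ≤ (1 + ε⁻¹) * (n : ℝ) ^ ε := by
  rcases Nat.eq_zero_or_pos n with rfl | hn
  · simp [hε.ne']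
  have hone : 1 ≤ (n : ℝ) ^ ε := Real.one_le_rpow (by exact_mod_cast hn) hε.le
  calc (harmonic n : ℝ) ≤ 1 + Real.log n := harmonic_le_one_add_log n
    _ ≤ 1 + (n : ℝ) ^ ε * ε⁻¹ := by gcongr; exact Real.log_le_rpow_div n.cast_nonneg hε
    _ ≤ (1 + ε⁻¹) * (n : ℝ) ^ ε := by nlinarith [inv_pos.2 hε]

lemma summable_harmonic_div_succ_sq :
    Summable fun n : ℕ => (harmonic n : ℝ) / ((n : ℝ) + 1) ^ 2 := by
  refine .of_nonneg_of_le (fun n => by have := harmonic_cast_nonneg n; positivity) (fun n => ?_)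
    ((Real.summable_nat_rpow.2 (by norm_num : (1 / 2 - 2 : ℝ) < -1)).mul_left 3)
  rcases Nat.eq_zero_or_pos n with rfl | hn
  · simp only [harmonic_zero, Rat.cast_zero, zero_div]; positivity
  have hn' : (0 : ℝ) < n := by exact_mod_cast hn
  calc (harmonic n : ℝ) / ((n : ℝ) + 1) ^ 2 ≤ 3 * (n : ℝ) ^ (1 / 2 : ℝ) / (n : ℝ) ^ (2 : ℝ) := by
        rw [Real.rpow_two]
        gcongr
        · have := harmonic_le_mul_rpow (by norm_num : (0 : ℝ) < 1 / 2) n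
          norm_num at this ⊢; linarith
        · linarith
    _ = 3 * (n : ℝ) ^ (1 / 2 - 2 : ℝ) := by rw [Real.rpow_sub hn', mul_div_assoc]

lemma tendsto_harmonic_sq_div_succ :
    Tendsto (fun n : ℕ => (harmonic n : ℝ) ^ 2 / ((n : ℝ) + 1)) atTop (𝓝 0) := by
  have hlim : Tendsto (fun n : ℕ => 25 * (n : ℝ) ^ (-(1 / 2) : ℝ)) atTop (𝓝 0) := by
    simpa using ((tendsto_rpow_neg_atTop (by norm_num : (0 : ℝ) < 1 / 2)).comp
      tendsto_natCast_atTop_atTop).const_mul (25 : ℝ)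
  refine squeeze_zero (fun n => by positivity) (fun n => ?_) hlim
  rcases Nat.eq_zero_or_pos n with rfl | hn
  · simp
  have hn' : (0 : ℝ) < n := by exact_mod_cast hn
  have hH : (harmonic n : ℝ) ≤ 5 * (n : ℝ) ^ (1 / 4 : ℝ) := by
    have := harmonic_le_mul_rpow (by norm_num : (0 : ℝ) < 1 / 4) n
    norm_num at this ⊢; linarith
  calc (harmonic n : ℝ) ^ 2 / ((n : ℝ) + 1)
      ≤ (5 * (n : ℝ) ^ (1 / 4 : ℝ)) ^ 2 / (n : ℝ) ^ (1 : ℝ) := by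
        rw [Real.rpow_one]
        gcongr
        · exact harmonic_cast_nonneg n
        · linarith
    _ = 25 * (n : ℝ) ^ (-(1 / 2) : ℝ) := by
        rw [mul_pow, ← Real.rpow_mul_natCast hn'.le, mul_div_assoc, ← Real.rpow_sub hn']
        norm_num

lemma hasSum_one_div_mul_add (m : ℕ) :
    HasSum (fun k : ℕ => 1 / (((k : ℝ) + 1) * (k + m + 2))) (harmonic (m + 1) / (m + 1)) := by
  have hanti : Antitone fun k : ℕ => 1 / ((k : ℝ) + 1) := fun a b hab => by
    dsimp only; gcongr
  have h := (hanti.hasSum_sub_add tendsto_one_div_add_atTop_nhds_zero_nat (m + 1)).div_const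
    ((m : ℝ) + 1)
  rw [← harmonic_cast_eq_sum_range] at h
  refine h.congr_fun fun k => ?_
  push_cast
  field_simp
  ring

lemma hasSum_one_div_mul_mul_add (j : ℕ) :
    HasSum (fun k : ℕ => 1 / (((j : ℝ) + 1) * (k + 1) * (j + k + 2)))
      (harmonic (j + 1) / ((j : ℝ) + 1) ^ 2) := by
  have h := (hasSum_one_div_mul_add j).div_const ((j : ℝ) + 1)
  rw [div_div, ← sq] at h
  refine h.congr_fun fun k => ?_
  field_simp
  ring

lemma sum_antidiagonal_one_div_mul_mul_add (s : ℕ) :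
    ∑ p ∈ antidiagonal s, 1 / (((p.1 : ℝ) + 1) * (p.2 + 1) * (p.1 + p.2 + 2)) =
      2 * harmonic (s + 1) / ((s : ℝ) + 2) ^ 2 := by
  have hsplit : ∀ p ∈ antidiagonal s, 1 / (((p.1 : ℝ) + 1) * (p.2 + 1) * (p.1 + p.2 + 2)) =
      (1 / ((p.1 : ℝ) + 1) + 1 / ((p.2 : ℝ) + 1)) / ((s : ℝ) + 2) ^ 2 := by
    intro p hp
    rw [HasAntidiagonal.mem_antidiagonal] at hp
    rw [← hp]
    push_cast
    field_simp
    ring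
  have hfst : ∑ p ∈ antidiagonal s, 1 / ((p.1 : ℝ) + 1) = harmonic (s + 1) := by
    rw [Nat.sum_antidiagonal_eq_sum_range_succ_mk, harmonic_cast_eq_sum_range]
  have hsnd : ∑ p ∈ antidiagonal s, 1 / ((p.2 : ℝ) + 1) = harmonic (s + 1) :=
    Nat.sum_antidiagonal_swap.trans hfst
  rw [sum_congr rfl hsplit, ← sum_div, sum_add_distrib, hfst, hsnd]
  ring

lemma summable_one_div_succ_pow_three : Summable fun n : ℕ => 1 / ((n : ℝ) + 1) ^ 3 :=
  (summable_nat_add_iff 1).2 (Real.summable_one_div_nat_pow (p := 3) |>.2 (by norm_num)) |>.congr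
    fun n => by push_cast; rfl

theorem hasSum_harmonic_div_succ_sq :
    HasSum (fun n : ℕ => (harmonic n : ℝ) / ((n : ℝ) + 1) ^ 2)
      (∑' n : ℕ, 1 / ((n : ℝ) + 1) ^ 3) := by
  set b : ℕ → ℝ := fun n => harmonic n / ((n : ℝ) + 1) ^ 2
  obtain ⟨B, hB⟩ := summable_harmonic_div_succ_sq
  have hz := summable_one_div_succ_pow_three.hasSum
  set z := ∑' n : ℕ, 1 / ((n : ℝ) + 1) ^ 3
  have hrows : HasSum (fun p : ℕ × ℕ => 1 / (((p.1 : ℝ) + 1) * (p.2 + 1) * (p.1 + p.2 + 2)))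
      (B + z) := by
    refine hasSum_prod_of_nonneg (fun p => by positivity) hasSum_one_div_mul_mul_add
      ((hB.add hz).congr_fun fun n => ?_)
    push_cast [harmonic_succ]
    field_simp
  have hdiag : HasSum (fun s => 2 * b (s + 1)) (B + z) := by
    refine hrows.sum_antidiagonal.congr_fun fun s => ?_
    rw [sum_antidiagonal_one_div_mul_mul_add]
    simp only [b]
    push_cast
    ring
  have h2B : HasSum (fun n => 2 * b n) (B + z) :=
    (hasSum_nat_add_iff' 1).1 (by simpa [b] using hdiag)
  have : 2 * B = B + z := (hB.mul_left 2).unique h2B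
  convert hB using 1
  linarith

lemma sum_range_harmonic_sq_div_mul (N : ℕ) :
    ∑ k ∈ range N, (harmonic (k + 1) : ℝ) ^ 2 / (((k : ℝ) + 1) * (k + 2)) =
      ∑ k ∈ range N, (2 * ((harmonic k : ℝ) / ((k : ℝ) + 1) ^ 2) + 1 / ((k : ℝ) + 1) ^ 3) -
        (harmonic N : ℝ) ^ 2 / ((N : ℝ) + 1) := by
  induction N with
  | zero => simp
  | succ N ih =>
    rw [sum_range_succ, sum_range_succ, ih]
    push_cast [harmonic_succ]
    field_simp
    ring

theorem hasSum_harmonic_sq_div_mul :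
    HasSum (fun k : ℕ => (harmonic (k + 1) : ℝ) ^ 2 / (((k : ℝ) + 1) * (k + 2)))
      (3 * ∑' n : ℕ, 1 / ((n : ℝ) + 1) ^ 3) := by
  rw [hasSum_iff_tendsto_nat_of_nonneg fun k => by positivity]
  have hc := (hasSum_harmonic_div_succ_sq.mul_left 2).add summable_one_div_succ_pow_three.hasSum
  convert hc.tendsto_sum_nat.sub tendsto_harmonic_sq_div_succ using 2
  · exact sum_range_harmonic_sq_div_mul _
  · ring

lemma riemannZeta_three : riemannZeta 3 = (∑' n : ℕ, 1 / ((n : ℝ) + 1) ^ 3 : ℝ) := by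
  rw [show (3 : ℂ) = (3 : ℕ) by norm_num, zeta_nat_eq_tsum_of_gt_one (by norm_num)]
  refine ((hasSum_nat_add_iff' 1).1 ?_).tsum_eq
  simpa using Complex.hasSum_ofReal.2 summable_one_div_succ_pow_three.hasSum

theorem euler_sum_12 :
    HasSum (fun k : ℕ => (H (k+1) : ℂ) ^ 2 / (((k : ℂ) + 1) * ((k : ℂ) + 2))) (3 * riemannZeta 3) := by
  rw [riemannZeta_three]
  convert Complex.hasSum_ofReal.2 hasSum_harmonic_sq_div_mul using 1
  · ext k; simp [H_eq_harmonic]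
  · push_cast; rfl
end
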